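/- arXiv:2205.04137 — 5 statements merged into one kernel-verified Lean document; each statement's English description precedes it below -/
import Mathlib

section
/- The function H̄ is strictly increasing on (0,1]. -/
/-!
Away from `x = a`, `H̄ x = c · x (log x - log a) / (x - a)` with `c = -(1 - a) / log a > 0`, and
the second factor is `x / L(x, a)`, where `L` is the logarithmic mean. Its derivative has the sign
of `x - a - a log (x / a)`, which is positive by `log t < t - 1`; the same inequality puts the
logarithmic mean strictly between `x` and `a`, so `x / L(x, a)` crosses the value `1 = H̄ a / c`
exactly at `x = a`.
-/

open Real Set

theorem StrictMonoOn.of_pivot {α β : Type*} [LinearOrder α] [Preorder β] {f : α → β}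
    {s : Set α} {c : α} (hlo : StrictMonoOn f (s ∩ Iio c)) (hhi : StrictMonoOn f (s ∩ Ioi c))
    (hlt : ∀ x ∈ s, x < c → f x < f c) (hgt : ∀ x ∈ s, c < x → f c < f x) :
    StrictMonoOn f s := by
  intro x hx y hy hxy
  rcases lt_trichotomy x c with hxc | rfl | hcx
  · rcases lt_or_ge y c with hyc | hcy
    · exact hlo ⟨hx, hxc⟩ ⟨hy, hyc⟩ hxy
    · rcases hcy.eq_or_lt with rfl | hcy
      · exact hlt x hx hxc
      · exact (hlt x hx hxc).trans (hgt y hy hcy)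
  · exact hgt y hy hxy
  · exact hhi ⟨hx, hcx⟩ ⟨hy, hcx.trans hxy⟩ hxy

lemma mul_log_sub_log_lt_sub {a x : ℝ} (ha : 0 < a) (hx : 0 < x) (hxa : x ≠ a) :
    a * (log x - log a) < x - a := by
  have h := log_lt_sub_one_of_pos (div_pos hx ha) (div_ne_one_of_ne hxa)
  rw [log_div hx.ne' ha.ne', lt_sub_iff_add_lt, lt_div_iff₀ ha] at h
  linarith

/-- `x / L(x, a)`, where `L(x, a) = (x - a) / (log x - log a)` is the logarithmic mean. -/
noncomputable def logMeanRatio (a x : ℝ) : ℝ :=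
  if x = a then 1 else x * (log x - log a) / (x - a)

section logMeanRatio

variable {a x : ℝ}

@[simp]
lemma logMeanRatio_self : logMeanRatio a a = 1 :=
  if_pos rfl

lemma logMeanRatio_of_ne (hxa : x ≠ a) :
    logMeanRatio a x = x * (log x - log a) / (x - a) :=
  if_neg hxa

lemma logMeanRatio_lt_one (ha : 0 < a) (hx : 0 < x) (hxa : x < a) : logMeanRatio a x < 1 := by
  have h := mul_log_sub_log_lt_sub hx ha hxa.ne'
  rw [logMeanRatio_of_ne hxa.ne, div_lt_one_of_neg (sub_neg.mpr hxa)]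
  linarith

lemma one_lt_logMeanRatio (ha : 0 < a) (hax : a < x) : 1 < logMeanRatio a x := by
  have h := mul_log_sub_log_lt_sub (ha.trans hax) ha hax.ne
  rw [logMeanRatio_of_ne hax.ne', one_lt_div (sub_pos.mpr hax)]
  linarith

lemma hasDerivAt_logMeanRatio (hx : 0 < x) (hxa : x ≠ a) :
    HasDerivAt (logMeanRatio a) ((x - a - a * (log x - log a)) / (x - a) ^ 2) x := by
  have hnum : HasDerivAt (fun t ↦ t * (log t - log a)) (1 * (log x - log a) + x * x⁻¹) x :=
    (hasDerivAt_id' x).mul ((hasDerivAt_log hx.ne').sub_const _)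
  have hquot := hnum.div ((hasDerivAt_id' x).sub_const a) (sub_ne_zero.mpr hxa)
  refine (hquot.congr_deriv ?_).congr_of_eventuallyEq ?_
  · rw [mul_inv_cancel₀ hx.ne']
    field_simp
    ring
  · filter_upwards [eventually_ne_nhds hxa] with t ht using logMeanRatio_of_ne ht

lemma strictMonoOn_logMeanRatio_of_notMem {D : Set ℝ} (hconv : Convex ℝ D) (hopen : IsOpen D)
    (hpos : D ⊆ Ioi 0) (haD : a ∉ D) (ha : 0 < a) : StrictMonoOn (logMeanRatio a) D := by
  have hne : ∀ x ∈ D, x ≠ a := fun x hx h ↦ haD (h ▸ hx)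
  refine strictMonoOn_of_hasDerivWithinAt_pos
    (f' := fun x ↦ (x - a - a * (log x - log a)) / (x - a) ^ 2) hconv
    (fun x hx ↦ (hasDerivAt_logMeanRatio (hpos hx) (hne x hx)).continuousAt.continuousWithinAt)
    (fun x hx ↦ ?_) (fun x hx ↦ ?_) <;> rw [hopen.interior_eq] at hx
  · exact (hasDerivAt_logMeanRatio (hpos hx) (hne x hx)).hasDerivWithinAt
  · exact div_pos (by linarith [mul_log_sub_log_lt_sub ha (hpos hx) (hne x hx)])
      (sq_pos_of_ne_zero (sub_ne_zero.mpr (hne x hx)))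

theorem strictMonoOn_logMeanRatio (ha : 0 < a) : StrictMonoOn (logMeanRatio a) (Ioi 0) := by
  have hpiece : ∀ I : Set ℝ, Convex ℝ I → IsOpen I → a ∉ I →
      StrictMonoOn (logMeanRatio a) (Ioi 0 ∩ I) := fun I hconv hopen haI ↦
    strictMonoOn_logMeanRatio_of_notMem ((convex_Ioi 0).inter hconv) (isOpen_Ioi.inter hopen)
      inter_subset_left (fun h ↦ haI h.2) ha
  refine StrictMonoOn.of_pivot (hpiece _ (convex_Iio a) isOpen_Iio (lt_irrefl a))
    (hpiece _ (convex_Ioi a) isOpen_Ioi (lt_irrefl a)) (fun x hx hxa ↦ ?_) (fun x _ hax ↦ ?_)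
  · exact logMeanRatio_self (a := a) ▸ logMeanRatio_lt_one ha hx hxa
  · exact logMeanRatio_self (a := a) ▸ one_lt_logMeanRatio ha hax

end logMeanRatio

theorem Hbar_strictMonoOn_general (a : ℝ)
    (ha : a ∈ Set.Ioo (0:ℝ) 1)
    (H : ℝ → ℝ)
    (hH : ∀ x : ℝ, H x =
      if x = 0 then 0
      else if x = a then -(1 - a) / Real.log a
      else -(x * (1 - a) * (Real.log x - Real.log a)) / ((x - a) * Real.log a)) :
    StrictMonoOn H (Set.Ioc (0:ℝ) 1) := by
  obtain ⟨ha0, ha1⟩ := ha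
  have hc : 0 < -(1 - a) / log a := div_pos_of_neg_of_neg (by linarith) (log_neg ha0 ha1)
  have hH_eq : EqOn (fun x ↦ -(1 - a) / log a * logMeanRatio a x) H (Ioc 0 1) := by
    intro x hx
    dsimp only
    rw [hH, if_neg hx.1.ne']
    split_ifs with hxa
    · rw [hxa, logMeanRatio_self, mul_one]
    · rw [logMeanRatio_of_ne hxa]
      field_simp
  exact ((strictMono_mul_left_of_pos hc).comp_strictMonoOn
    ((strictMonoOn_logMeanRatio ha0).mono Ioc_subset_Ioi_self)).congr hH_eq

/-- H̄ is strictly increasing on (0,1]. -/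
theorem Hbar_strictMonoOn (μ a : ℝ) (hμ : μ ∈ Set.Ioo (0:ℝ) 1)
    (ha : a ∈ Set.Ioo (0:ℝ) 1) (haμ : a * (1 - Real.log a) = μ)
    (H : ℝ → ℝ)
    (hH : ∀ x : ℝ, H x =
      if x = 0 then 0
      else if x = a then -(1 - a) / Real.log a
      else -(x * (1 - a) * (Real.log x - Real.log a)) / ((x - a) * Real.log a)) :
    StrictMonoOn H (Set.Ioc (0:ℝ) 1) :=
  Hbar_strictMonoOn_general a ha H hH
end

section
/- The limit of H̄'(x) as x → a equals -(1-a)/(2a·ln a), which is strictly positive. -/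
/-!
The numerator `x - a log x - μ` vanishes at `x = a` exactly because `μ = a (1 - log a)`, and so
does its derivative `1 - a / x`; by L'Hôpital the quotient by `(x - a)²` tends to
`(1 - a / x) / (2 (x - a)) = 1 / (2x) → 1 / (2a)`. The sign of the limit comes from `log a < 0`.
-/

open Filter Real Topology

lemma tendsto_sub_mul_log_div_sq {a : ℝ} (ha : 0 < a) :
    Tendsto (fun x => (x - a * log x - (a - a * log a)) / (x - a) ^ 2) (𝓝[≠] a)
      (𝓝 (1 / (2 * a))) := by
  have hpos : ∀ᶠ x in 𝓝[≠] a, 0 < x ∧ x ≠ a :=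
    Eventually.and (nhdsWithin_le_nhds (eventually_gt_nhds ha)) self_mem_nhdsWithin
  apply HasDerivAt.lhopital_zero_nhdsNE (f' := fun x => 1 - a / x) (g' := fun x => 2 * (x - a))
  · filter_upwards [hpos] with x hx
    simpa [div_eq_mul_inv] using
      ((hasDerivAt_id x).sub ((hasDerivAt_log hx.1.ne').const_mul a)).sub_const
        (a - a * log a)
  · filter_upwards with x
    simpa using ((hasDerivAt_id x).sub_const a).fun_pow 2
  · filter_upwards [hpos] with x hx
    have : x - a ≠ 0 := sub_ne_zero.mpr hx.2
    positivity
  · have : ContinuousAt (fun x => x - a * log x - (a - a * log a)) a :=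
      (continuousAt_id.sub (continuousAt_const.mul (continuousAt_log ha.ne'))).sub
        continuousAt_const
    simpa using this.tendsto.mono_left nhdsWithin_le_nhds
  · have : ContinuousAt (fun x : ℝ => (x - a) ^ 2) a :=
      (continuousAt_id.sub continuousAt_const).pow 2
    simpa using this.tendsto.mono_left nhdsWithin_le_nhds
  · have hquot : ∀ᶠ x in 𝓝[≠] a, 1 / (2 * x) = (1 - a / x) / (2 * (x - a)) := by
      filter_upwards [hpos] with x hx
      have : x - a ≠ 0 := sub_ne_zero.mpr hx.2
      field_simp [hx.1.ne']
    refine Tendsto.congr' hquot (Tendsto.mono_left ?_ nhdsWithin_le_nhds)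
    exact tendsto_const_nhds.div (tendsto_const_nhds.mul tendsto_id) (by positivity)

theorem Hbar_deriv_tendsto_at_a_general (μ a : ℝ)
    (ha : a ∈ Set.Ioo (0:ℝ) 1) (haμ : a * (1 - Real.log a) = μ) :
    Filter.Tendsto
      (fun x : ℝ =>
        -((1 - a) * (x - a * Real.log x - μ)) / ((x - a) ^ 2 * Real.log a))
      (nhdsWithin a {a}ᶜ) (nhds (-(1 - a) / (2 * a * Real.log a))) ∧
    0 < -(1 - a) / (2 * a * Real.log a) := by
  obtain ⟨ha0, ha1⟩ := ha
  have hlog : log a < 0 := log_neg ha0 ha1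
  have hμ : μ = a - a * log a := by rw [← haμ]; ring
  subst hμ
  refine ⟨?_, div_pos_of_neg_of_neg (by linarith) (mul_neg_of_pos_of_neg (by positivity) hlog)⟩
  have hlim := (tendsto_sub_mul_log_div_sq ha0).const_mul (-(1 - a) / log a)
  convert hlim using 2 with x <;> field_simp

/-- H̄'(x) → -(1-a)/(2a·ln a) as x → a, and this limit is strictly positive,
where H̄'(x) = -(1-a)(x - a·ln x - μ)/((x-a)²·ln a) for x ≠ a. -/
theorem Hbar_deriv_tendsto_at_a (μ a : ℝ) (hμ : μ ∈ Set.Ioo (0:ℝ) 1)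
    (ha : a ∈ Set.Ioo (0:ℝ) 1) (haμ : a * (1 - Real.log a) = μ) :
    Filter.Tendsto
      (fun x : ℝ =>
        -((1 - a) * (x - a * Real.log x - μ)) / ((x - a) ^ 2 * Real.log a))
      (nhdsWithin a {a}ᶜ) (nhds (-(1 - a) / (2 * a * Real.log a))) ∧
    0 < -(1 - a) / (2 * a * Real.log a) :=
  Hbar_deriv_tendsto_at_a_general μ a ha haμ
end

section
/- For any x ∈ (0,1] with x ≠ a, H̄(x) - x·H̄'(x) = x·(H̄(x) + (1-a)/ln a)/(x - a), and this quantity is strictly positive. -/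
/-!
Clearing denominators, `H̄(x) - x H̄'(x) = (1 - a) x (x log (x / a) - (x - a)) / (-log a · (x - a)²)`.
The denominator is positive since `a < 1`, and the bracket in the numerator is positive by the
strict inequality `t - 1 < t log t` for `t = x / a ≠ 1`.
-/

open Real

lemma sub_lt_mul_log_sub_log {a x : ℝ} (ha : 0 < a) (hx : 0 < x) (hxa : x ≠ a) :
    x - a < x * (log x - log a) := by
  have hne : x / a ≠ 1 := by rwa [Ne, div_eq_one_iff_eq ha.ne']
  have h := Real.self_sub_one_lt_mul_log (div_pos hx ha).le hne
  rw [Real.log_div hx.ne' ha.ne'] at h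
  have := mul_lt_mul_of_pos_left h ha
  field_simp at this
  linarith

theorem Hbar_virtual_positive_general (μ a : ℝ)
    (ha : a ∈ Set.Ioo (0:ℝ) 1) (haμ : a * (1 - Real.log a) = μ)
    (H H' : ℝ → ℝ)
    (hH : ∀ x : ℝ, x ≠ 0 → x ≠ a →
      H x = -(x * (1 - a) * (Real.log x - Real.log a)) / ((x - a) * Real.log a))
    (hH' : ∀ x : ℝ, x ≠ a →
      H' x = -((1 - a) * (x - a * Real.log x - μ)) / ((x - a) ^ 2 * Real.log a)) :
    ∀ x ∈ Set.Ioc (0:ℝ) 1, x ≠ a →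
      H x - x * H' x = x * (H x + (1 - a) / Real.log a) / (x - a) ∧
      0 < H x - x * H' x := by
  obtain ⟨ha0, ha1⟩ := ha
  rintro x ⟨hx0, -⟩ hxa
  have hloga : log a < 0 := log_neg ha0 ha1
  have hxa' : x - a ≠ 0 := sub_ne_zero.mpr hxa
  have hvirtual : H x - x * H' x =
      (1 - a) * x * (x * (log x - log a) - (x - a)) / (-log a * (x - a) ^ 2) := by
    rw [hH x hx0.ne' hxa, hH' x hxa, ← haμ]
    field_simp
    ring
  refine ⟨?_, ?_⟩
  · rw [hvirtual, hH x hx0.ne' hxa]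
    field_simp
    ring
  · rw [hvirtual]
    have hgibbs := sub_lt_mul_log_sub_log ha0 hx0 hxa
    exact div_pos (mul_pos (mul_pos (by linarith) hx0) (by linarith))
      (mul_pos (neg_pos.mpr hloga) (pow_two_pos_of_ne_zero hxa'))

/-- For any x ∈ (0,1] with x ≠ a,
H̄(x) - x·H̄'(x) = x·(H̄(x) + (1-a)/ln a)/(x - a), and this is strictly positive. -/
theorem Hbar_virtual_positive (μ a : ℝ) (hμ : μ ∈ Set.Ioo (0:ℝ) 1)
    (ha : a ∈ Set.Ioo (0:ℝ) 1) (haμ : a * (1 - Real.log a) = μ)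
    (H H' : ℝ → ℝ)
    (hH : ∀ x : ℝ, x ≠ 0 → x ≠ a →
      H x = -(x * (1 - a) * (Real.log x - Real.log a)) / ((x - a) * Real.log a))
    (hHa : H a = -(1 - a) / Real.log a)
    (hH' : ∀ x : ℝ, x ≠ a →
      H' x = -((1 - a) * (x - a * Real.log x - μ)) / ((x - a) ^ 2 * Real.log a)) :
    ∀ x ∈ Set.Ioc (0:ℝ) 1, x ≠ a →
      H x - x * H' x = x * (H x + (1 - a) / Real.log a) / (x - a) ∧
      0 < H x - x * H' x :=
  Hbar_virtual_positive_general μ a ha haμ H H' hH hH'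
end

section
/- For any CDF G on [0,1] with mean μ, the revenue functional L(G) = ∫₀¹ {(1 - G(x)²)(x·H̄'(x) + H̄(x)) - 2·H̄(x)·G(x)(1-G(x))} dx satisfies L(G) ≥ L(Ḡ) = 2a - a², where Ḡ is the equal-revenue distribution with parameter a. -/
/-!
For fixed `x` the integrand is a quadratic in `t = G x` with leading coefficient
`H̄ x - x H̄' x ≥ 0`. Add the Lagrange multiplier term `2 c t`, where
`c = H̄ a = (a - 1) / log a`: for `x < a` the Lagrangian is minimised over `t ≥ 0` at `t = 0`
because `H̄ ≤ c` there, and for `x > a` it is minimised at `t = 1 - a / x = Ḡ x` because `H̄`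
solves `a H̄ / x + (x - a) H̄' = c`. Integrating, the multiplier terms cancel since `G` and `Ḡ`
have the same mean. The value `2a - a²` comes from the antiderivatives `x H̄` on `[0, a]` and
`(2a - a² / x) H̄` on `[a, 1]`, together with `H̄ 1 = 1`.
-/

open Real MeasureTheory intervalIntegral Set Filter

lemma Real.log_sub_log_le {a x : ℝ} (ha : 0 < a) (hx : 0 < x) :
    log x - log a ≤ x / a - 1 := by
  rw [← log_div hx.ne' ha.ne']
  exact log_le_sub_one_of_pos (div_pos hx ha)

lemma Real.one_sub_div_le_log_sub_log {a x : ℝ} (ha : 0 < a) (hx : 0 < x) :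
    1 - a / x ≤ log x - log a := by
  have := log_sub_log_le hx ha
  linarith

noncomputable def lagrangeMult (a : ℝ) : ℝ := (a - 1) / log a

noncomputable def xLogRatio (a x : ℝ) : ℝ := x * (log x - log a)

/-- `H̄` as `c` times the divided difference of `x ↦ x log (x / a)` at `a`; `dslope` supplies the
value `c` at `a` and makes continuity there a differentiability statement. -/
noncomputable def hBar (a : ℝ) : ℝ → ℝ := fun x => lagrangeMult a * dslope (xLogRatio a) a x

noncomputable def hBarDeriv (a x : ℝ) : ℝ :=
  lagrangeMult a * (x - a - a * (log x - log a)) / (x - a) ^ 2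

section hBar

variable {a x : ℝ}

lemma lagrangeMult_pos (ha0 : 0 < a) (ha1 : a < 1) : 0 < lagrangeMult a :=
  div_pos_of_neg_of_neg (by linarith) (log_neg ha0 ha1)

lemma hasDerivAt_xLogRatio (hx : x ≠ 0) :
    HasDerivAt (xLogRatio a) (log x - log a + 1) x := by
  have := (hasDerivAt_id' x).mul ((hasDerivAt_log hx).sub_const (log a))
  rw [one_mul, mul_inv_cancel₀ hx] at this
  exact this

lemma continuous_xLogRatio : Continuous (xLogRatio a) := by
  have : xLogRatio a = fun x => x * log x - log a * x := by
    ext x; unfold xLogRatio; ring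
  rw [this]
  exact continuous_mul_log.sub (continuous_const_mul _)

lemma hBar_of_ne (hx : x ≠ a) :
    hBar a x = lagrangeMult a * (x * (log x - log a)) / (x - a) := by
  rw [hBar, dslope_of_ne _ hx, slope_def_field, xLogRatio, xLogRatio, sub_self, mul_zero,
    sub_zero, mul_div_assoc]
  ring

lemma hBar_self (ha : 0 < a) : hBar a a = lagrangeMult a := by
  rw [hBar, dslope_same, (hasDerivAt_xLogRatio ha.ne').deriv]
  simp

lemma hBar_one (ha0 : 0 < a) (ha1 : a < 1) : hBar a 1 = 1 := by
  have : log a ≠ 0 := (log_neg ha0 ha1).ne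
  have : (1:ℝ) - a ≠ 0 := by linarith
  rw [hBar_of_ne ha1.ne', lagrangeMult, log_one]
  field_simp
  ring

lemma continuous_hBar (ha : 0 < a) : Continuous (hBar a) := by
  refine continuous_const.mul (continuous_iff_continuousAt.2 fun x => ?_)
  rcases eq_or_ne x a with rfl | hx
  · exact continuousAt_dslope_same.2 (hasDerivAt_xLogRatio ha.ne').differentiableAt
  · exact (continuousAt_dslope_of_ne hx).2 continuous_xLogRatio.continuousAt

lemma hasDerivAt_hBar (hx0 : x ≠ 0) (hxa : x ≠ a) :
    HasDerivAt (hBar a) (hBarDeriv a x) x := by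
  have hxa' : x - a ≠ 0 := sub_ne_zero.2 hxa
  have h := ((hasDerivAt_xLogRatio (a := a) hx0).div ((hasDerivAt_id' x).sub_const a)
    hxa').const_mul (lagrangeMult a)
  refine (h.congr_deriv ?_).congr_of_eventuallyEq ?_
  · rw [hBarDeriv, xLogRatio]
    field_simp
    ring
  · filter_upwards [isOpen_ne.mem_nhds hxa] with y hy
    rw [hBar_of_ne hy, mul_div_assoc]
    rfl

lemma hBar_mul_div_add_hBarDeriv (hx0 : x ≠ 0) (hxa : x ≠ a) :
    a * hBar a x / x + (x - a) * hBarDeriv a x = lagrangeMult a := by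
  have hxa' : x - a ≠ 0 := sub_ne_zero.2 hxa
  rw [hBar_of_ne hxa, hBarDeriv]
  field_simp
  ring

lemma hBar_eq_ite (ha0 : 0 < a) (ha1 : a < 1) (x : ℝ) :
    hBar a x = if x = 0 then 0
      else if x = a then -(1 - a) / log a
      else -(x * (1 - a) * (log x - log a)) / ((x - a) * log a) := by
  have hlog : log a ≠ 0 := (log_neg ha0 ha1).ne
  split_ifs with hx0 hxa
  · simp [hx0, hBar_of_ne ha0.ne]
  · rw [hxa, hBar_self ha0, lagrangeMult]
    ring
  · rw [hBar_of_ne hxa, lagrangeMult]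
    field_simp
    ring

lemma hBarDeriv_eq (ha0 : 0 < a) (ha1 : a < 1) (hxa : x ≠ a) :
    hBarDeriv a x =
      -((1 - a) * (x - a * log x - a * (1 - log a))) / ((x - a) ^ 2 * log a) := by
  have hlog : log a ≠ 0 := (log_neg ha0 ha1).ne
  have hxa' : x - a ≠ 0 := sub_ne_zero.2 hxa
  rw [hBarDeriv, lagrangeMult]
  field_simp
  ring

lemma hBar_le_lagrangeMult (ha0 : 0 < a) (ha1 : a < 1) (hx : 0 < x) (hxa : x < a) :
    hBar a x ≤ lagrangeMult a := by
  have hlog := one_sub_div_le_log_sub_log ha0 hx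
  rw [hBar_of_ne hxa.ne, mul_div_assoc]
  refine mul_le_of_le_one_right (lagrangeMult_pos ha0 ha1).le
    ((div_le_one_of_neg (by linarith)).2 ?_)
  have : x * (1 - a / x) = x - a := by field_simp
  nlinarith [mul_le_mul_of_nonneg_left hlog hx.le]

lemma mul_hBarDeriv_nonneg (ha0 : 0 < a) (ha1 : a < 1) (hx : 0 < x) :
    0 ≤ x * hBarDeriv a x := by
  have hlog := log_sub_log_le ha0 hx
  have : a * (x / a - 1) = x - a := by field_simp
  have : 0 ≤ x - a - a * (log x - log a) := by nlinarith [mul_le_mul_of_nonneg_left hlog ha0.le]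
  unfold hBarDeriv
  have := lagrangeMult_pos ha0 ha1
  positivity

lemma mul_hBarDeriv_le_hBar (ha0 : 0 < a) (ha1 : a < 1) (hx : 0 < x) (hxa : x ≠ a) :
    x * hBarDeriv a x ≤ hBar a x := by
  have hxa' : x - a ≠ 0 := sub_ne_zero.2 hxa
  have hlog := one_sub_div_le_log_sub_log ha0 hx
  have : x * (1 - a / x) = x - a := by field_simp
  have : 0 ≤ x * (log x - log a) - x + a := by nlinarith [mul_le_mul_of_nonneg_left hlog hx.le]
  have key : hBar a x - x * hBarDeriv a x =
      lagrangeMult a * x * (x * (log x - log a) - x + a) / (x - a) ^ 2 := by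
    rw [hBar_of_ne hxa, hBarDeriv]
    field_simp
    ring
  have := lagrangeMult_pos ha0 ha1
  have : 0 ≤ hBar a x - x * hBarDeriv a x := by rw [key]; positivity
  linarith

end hBar

def revenueIntegrand (H H' : ℝ → ℝ) (t x : ℝ) : ℝ :=
  (1 - t ^ 2) * (x * H' x + H x) - 2 * H x * t * (1 - t)

lemma revenueIntegrand_sub_add_mul_sub (H H' : ℝ → ℝ) (c s t x : ℝ) :
    revenueIntegrand H H' t x - revenueIntegrand H H' s x + 2 * c * (t - s) =
      (H x - x * H' x) * (t - s) ^ 2 + 2 * (t - s) * ((H x - x * H' x) * s - H x + c) := by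
  unfold revenueIntegrand
  ring

lemma abs_revenueIntegrand_le (H H' : ℝ → ℝ) {t : ℝ} (ht : t ∈ Icc (0:ℝ) 1) (x : ℝ) :
    |revenueIntegrand H H' t x| ≤ |x * H' x| + 2 * |H x| := by
  obtain ⟨ht0, ht1⟩ := ht
  have h1 : |1 - t ^ 2| ≤ 1 := abs_le.2 ⟨by nlinarith, by nlinarith⟩
  have h2 : |2 * t * (1 - t)| ≤ 1 := abs_le.2 ⟨by nlinarith, by nlinarith⟩
  calc |revenueIntegrand H H' t x|
      = |(1 - t ^ 2) * (x * H' x + H x) - 2 * t * (1 - t) * H x| := by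
        unfold revenueIntegrand
        ring_nf
    _ ≤ |1 - t ^ 2| * |x * H' x + H x| + |2 * t * (1 - t)| * |H x| := by
        rw [← abs_mul, ← abs_mul]
        exact abs_sub _ _
    _ ≤ 1 * (|x * H' x| + |H x|) + 1 * |H x| := by
        gcongr
        exact abs_add_le _ _
    _ = |x * H' x| + 2 * |H x| := by ring

lemma integral_revenueIntegrand_congr_deriv {H H₁' H₂' F : ℝ → ℝ} {a b p : ℝ}
    (h : ∀ x, x ≠ p → H₁' x = H₂' x) :
    ∫ x in a..b, revenueIntegrand H H₁' (F x) x =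
      ∫ x in a..b, revenueIntegrand H H₂' (F x) x := by
  refine integral_congr_ae ?_
  filter_upwards [volume.ae_ne p] with x hx _
  rw [revenueIntegrand, revenueIntegrand, h x hx]

noncomputable def equalRevenueCDF (a x : ℝ) : ℝ := if x < 1 then max 0 (1 - a / x) else 1

section equalRevenueCDF

variable {a x : ℝ}

lemma equalRevenueCDF_eq_zero (ha1 : a < 1) (hx : 0 < x) (hxa : x ≤ a) :
    equalRevenueCDF a x = 0 := by
  rw [equalRevenueCDF, if_pos (by linarith), max_eq_left]
  linarith [(one_le_div hx).2 hxa]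

lemma equalRevenueCDF_eq_one_sub (ha : 0 < a) (hax : a ≤ x) (hx1 : x < 1) :
    equalRevenueCDF a x = 1 - a / x := by
  rw [equalRevenueCDF, if_pos hx1, max_eq_right]
  linarith [(div_le_one (by linarith)).2 hax]

lemma equalRevenueCDF_mem_Icc (ha : 0 ≤ a) (hx : 0 < x) :
    equalRevenueCDF a x ∈ Icc (0:ℝ) 1 := by
  unfold equalRevenueCDF
  split_ifs
  · exact ⟨le_max_left _ _, max_le zero_le_one (by linarith [div_nonneg ha hx.le])⟩
  · exact ⟨zero_le_one, le_rfl⟩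

lemma measurable_equalRevenueCDF : Measurable (equalRevenueCDF a) :=
  Measurable.ite (measurableSet_lt measurable_id measurable_const) (by fun_prop)
    measurable_const

lemma revenueIntegrand_equalRevenueCDF_add_le (ha0 : 0 < a) (ha1 : a < 1) (hx0 : 0 < x)
    (hx1 : x < 1) (hxa : x ≠ a) {t : ℝ} (ht : 0 ≤ t) :
    revenueIntegrand (hBar a) (hBarDeriv a) (equalRevenueCDF a x) x +
        2 * lagrangeMult a * equalRevenueCDF a x ≤
      revenueIntegrand (hBar a) (hBarDeriv a) t x + 2 * lagrangeMult a * t := by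
  have hA := mul_hBarDeriv_le_hBar ha0 ha1 hx0 hxa
  suffices 0 ≤ revenueIntegrand (hBar a) (hBarDeriv a) t x -
      revenueIntegrand (hBar a) (hBarDeriv a) (equalRevenueCDF a x) x +
      2 * lagrangeMult a * (t - equalRevenueCDF a x) by linarith
  rw [revenueIntegrand_sub_add_mul_sub]
  rcases hxa.lt_or_gt with hlt | hgt
  · rw [equalRevenueCDF_eq_zero ha1 hx0 hlt.le]
    have := hBar_le_lagrangeMult ha0 ha1 hx0 hlt
    have : 0 ≤ hBar a x - x * hBarDeriv a x := by linarith
    simp only [sub_zero, mul_zero, zero_sub]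
    exact add_nonneg (mul_nonneg this (sq_nonneg t)) (mul_nonneg (by positivity) (by linarith))
  · rw [equalRevenueCDF_eq_one_sub ha0 hgt.le hx1]
    have hstat : (hBar a x - x * hBarDeriv a x) * (1 - a / x) - hBar a x + lagrangeMult a = 0 := by
      rw [← hBar_mul_div_add_hBarDeriv hx0.ne' hgt.ne']
      field_simp
      ring
    rw [hstat, mul_zero, add_zero]
    exact mul_nonneg (by linarith) (sq_nonneg _)

end equalRevenueCDF

section integrability

variable {a : ℝ}

lemma measurable_hBarDeriv : Measurable (hBarDeriv a) := by
  unfold hBarDeriv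
  fun_prop

lemma exists_bound_revenueIntegrand (ha0 : 0 < a) (ha1 : a < 1) :
    ∃ M, ∀ x ∈ Ioc (0:ℝ) 1, x ≠ a → ∀ t ∈ Icc (0:ℝ) 1,
      |revenueIntegrand (hBar a) (hBarDeriv a) t x| ≤ M := by
  obtain ⟨M, hM⟩ := (isCompact_Icc (a := (0:ℝ)) (b := 1)).exists_bound_of_continuousOn
    (continuous_hBar ha0).continuousOn
  refine ⟨3 * M, fun x hx hxa t ht => (abs_revenueIntegrand_le _ _ ht x).trans ?_⟩
  have hH := hM x (Ioc_subset_Icc_self hx)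
  have hxH' : |x * hBarDeriv a x| ≤ |hBar a x| := by
    rw [abs_of_nonneg (mul_hBarDeriv_nonneg ha0 ha1 hx.1)]
    exact (mul_hBarDeriv_le_hBar ha0 ha1 hx.1 hxa).trans (le_abs_self _)
  rw [Real.norm_eq_abs] at hH
  linarith

lemma intervalIntegrable_revenueIntegrand (ha0 : 0 < a) (ha1 : a < 1) {F : ℝ → ℝ}
    (hF : AEStronglyMeasurable F (volume.restrict (Ioc 0 1)))
    (hF01 : ∀ x ∈ Ioc (0:ℝ) 1, F x ∈ Icc (0:ℝ) 1) :
    IntervalIntegrable (fun x => revenueIntegrand (hBar a) (hBarDeriv a) (F x) x) volume 0 1 := by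
  obtain ⟨M, hM⟩ := exists_bound_revenueIntegrand ha0 ha1
  have hH := (continuous_hBar ha0).measurable.aestronglyMeasurable
    (μ := volume.restrict (Ioc (0:ℝ) 1))
  have hH' := (measurable_hBarDeriv (a := a)).aestronglyMeasurable
    (μ := volume.restrict (Ioc (0:ℝ) 1))
  rw [intervalIntegrable_iff_integrableOn_Ioc_of_le zero_le_one]
  refine IntegrableOn.of_bound measure_Ioc_lt_top ?_ M ?_
  · unfold revenueIntegrand
    fun_prop
  · filter_upwards [ae_restrict_mem measurableSet_Ioc, ae_restrict_of_ae (volume.ae_ne a)]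
      with x hx hxa
    exact hM x hx hxa _ (hF01 x hx)

lemma intervalIntegrable_equalRevenueCDF (ha : 0 ≤ a) :
    IntervalIntegrable (equalRevenueCDF a) volume 0 1 := by
  rw [intervalIntegrable_iff_integrableOn_Ioc_of_le zero_le_one]
  refine IntegrableOn.of_bound measure_Ioc_lt_top
    measurable_equalRevenueCDF.aestronglyMeasurable 1 ?_
  filter_upwards [ae_restrict_mem measurableSet_Ioc] with x hx
  obtain ⟨h0, h1⟩ := equalRevenueCDF_mem_Icc ha hx.1
  rw [Real.norm_eq_abs, abs_le]
  constructor <;> linarith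

end integrability

lemma intervalIntegral.integral_eq_add_of_mem_Icc {f : ℝ → ℝ} {a b c : ℝ}
    (hf : IntervalIntegrable f volume a b) (hc : c ∈ Icc a b) :
    ∫ x in a..b, f x = (∫ x in a..c, f x) + ∫ x in c..b, f x :=
  (integral_add_adjacent_intervals (hf.mono_set (uIcc_subset_uIcc_left (Icc_subset_uIcc hc)))
    (hf.mono_set (uIcc_subset_uIcc_right (Icc_subset_uIcc hc)))).symm

section integrals

variable {a : ℝ}

lemma integral_equalRevenueCDF (ha0 : 0 < a) (ha1 : a < 1) :
    ∫ x in (0:ℝ)..1, equalRevenueCDF a x = 1 - a + a * log a := by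
  have hint := intervalIntegrable_equalRevenueCDF ha0.le
  have hzero : ∫ x in (0:ℝ)..a, equalRevenueCDF a x = 0 := by
    refine integral_zero_ae (Eventually.of_forall fun x hx => ?_)
    rw [uIoc_of_le ha0.le] at hx
    exact equalRevenueCDF_eq_zero ha1 hx.1 hx.2
  have hpos : ∫ x in a..1, equalRevenueCDF a x = 1 - a + a * log a := by
    have hcont : ContinuousOn (fun x => x - a * log x) (Icc a 1) := by
      refine continuousOn_id.sub (continuousOn_const.mul (continuousOn_log.mono ?_))
      intro x hx
      exact (ha0.trans_le hx.1).ne'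
    rw [integral_eq_sub_of_hasDerivAt_of_le ha1.le hcont (fun x hx => ?_)
      (hint.mono_set (uIcc_subset_uIcc_right (Icc_subset_uIcc ⟨ha0.le, ha1.le⟩)))]
    · simp only [log_one]
      ring
    · rw [equalRevenueCDF_eq_one_sub ha0 hx.1.le hx.2, div_eq_mul_inv]
      exact (hasDerivAt_id' x).sub ((hasDerivAt_log (ha0.trans hx.1).ne').const_mul a)
  rw [integral_eq_add_of_mem_Icc hint ⟨ha0.le, ha1.le⟩, hzero, hpos, zero_add]

lemma integral_revenueIntegrand_equalRevenueCDF (ha0 : 0 < a) (ha1 : a < 1) :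
    ∫ x in (0:ℝ)..1, revenueIntegrand (hBar a) (hBarDeriv a) (equalRevenueCDF a x) x =
      2 * a - a ^ 2 := by
  have hint := intervalIntegrable_revenueIntegrand ha0 ha1
    measurable_equalRevenueCDF.aestronglyMeasurable
    (fun x hx => equalRevenueCDF_mem_Icc ha0.le hx.1)
  have hH := continuous_hBar ha0
  have hlow : ∫ x in (0:ℝ)..a, revenueIntegrand (hBar a) (hBarDeriv a) (equalRevenueCDF a x) x =
      a * lagrangeMult a := by
    rw [integral_eq_sub_of_hasDerivAt_of_le ha0.le (continuous_id.mul hH).continuousOn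
      (fun x hx => ?_)
      (hint.mono_set (uIcc_subset_uIcc_left (Icc_subset_uIcc ⟨ha0.le, ha1.le⟩)))]
    · simp [hBar_self ha0]
    · have := (hasDerivAt_id' x).mul (hasDerivAt_hBar (a := a) hx.1.ne' hx.2.ne)
      rw [equalRevenueCDF_eq_zero ha1 hx.1 hx.2.le]
      exact this.congr_deriv (by unfold revenueIntegrand; ring)
  have hhigh : ∫ x in a..1, revenueIntegrand (hBar a) (hBarDeriv a) (equalRevenueCDF a x) x =
      2 * a - a ^ 2 - a * lagrangeMult a := by
    have hcont : ContinuousOn (fun x => (2 * a - a ^ 2 * x⁻¹) * hBar a x) (Icc a 1) := by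
      refine (continuousOn_const.sub (continuousOn_const.mul (continuousOn_inv₀.mono ?_))).mul
        hH.continuousOn
      intro x hx
      exact (ha0.trans_le hx.1).ne'
    rw [integral_eq_sub_of_hasDerivAt_of_le ha1.le hcont (fun x hx => ?_)
      (hint.mono_set (uIcc_subset_uIcc_right (Icc_subset_uIcc ⟨ha0.le, ha1.le⟩)))]
    · rw [hBar_one ha0 ha1, hBar_self ha0]
      field_simp
      ring
    · have hx0 : x ≠ 0 := (ha0.trans hx.1).ne'
      have := (((hasDerivAt_inv hx0).const_mul (a ^ 2)).const_sub (2 * a)).mul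
        (hasDerivAt_hBar (a := a) hx0 hx.1.ne')
      rw [equalRevenueCDF_eq_one_sub ha0 hx.1.le hx.2]
      exact this.congr_deriv (by unfold revenueIntegrand; field_simp; ring)
  rw [integral_eq_add_of_mem_Icc hint ⟨ha0.le, ha1.le⟩, hlow, hhigh]
  ring

end integrals

lemma integral_revenueIntegrand_equalRevenueCDF_le {a : ℝ} (ha0 : 0 < a) (ha1 : a < 1)
    {G : ℝ → ℝ} (hG : IntervalIntegrable G volume 0 1)
    (hG01 : ∀ x ∈ Ioc (0:ℝ) 1, G x ∈ Icc (0:ℝ) 1)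
    (hmean : ∫ x in (0:ℝ)..1, G x = ∫ x in (0:ℝ)..1, equalRevenueCDF a x) :
    ∫ x in (0:ℝ)..1, revenueIntegrand (hBar a) (hBarDeriv a) (equalRevenueCDF a x) x ≤
      ∫ x in (0:ℝ)..1, revenueIntegrand (hBar a) (hBarDeriv a) (G x) x := by
  have hGbar := intervalIntegrable_equalRevenueCDF ha0.le
  have hφG := intervalIntegrable_revenueIntegrand ha0 ha1 hG.1.aestronglyMeasurable hG01
  have hφGbar := intervalIntegrable_revenueIntegrand ha0 ha1
    measurable_equalRevenueCDF.aestronglyMeasurable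
    (fun x hx => equalRevenueCDF_mem_Icc ha0.le hx.1)
  have hlagrangian := integral_mono_ae_restrict zero_le_one
    (hφGbar.add (hGbar.const_mul (2 * lagrangeMult a)))
    (hφG.add (hG.const_mul (2 * lagrangeMult a)))
    (by
      filter_upwards [ae_restrict_mem measurableSet_Icc, ae_restrict_of_ae (volume.ae_ne 0),
        ae_restrict_of_ae (volume.ae_ne 1), ae_restrict_of_ae (volume.ae_ne a)]
        with x hx hx0 hx1 hxa
      exact revenueIntegrand_equalRevenueCDF_add_le ha0 ha1 (hx.1.lt_of_ne' hx0)
        (hx.2.lt_of_ne hx1) hxa (hG01 x ⟨hx.1.lt_of_ne' hx0, hx.2⟩).1)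
  rw [integral_add hφGbar (hGbar.const_mul _), integral_add hφG (hG.const_mul _),
    intervalIntegral.integral_const_mul, intervalIntegral.integral_const_mul, hmean] at hlagrangian
  linarith

theorem revenue_minimized_by_Gbar_general (μ a : ℝ)
    (ha : a ∈ Set.Ioo (0:ℝ) 1) (haμ : a * (1 - Real.log a) = μ)
    (H H' Gbar : ℝ → ℝ)
    (hH : ∀ x : ℝ, H x =
      if x = 0 then 0
      else if x = a then -(1 - a) / Real.log a
      else -(x * (1 - a) * (Real.log x - Real.log a)) / ((x - a) * Real.log a))
    (hH' : ∀ x : ℝ, x ≠ a →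
      H' x = -((1 - a) * (x - a * Real.log x - μ)) / ((x - a) ^ 2 * Real.log a))
    (hGbar : ∀ x : ℝ, Gbar x = if x < 1 then max 0 (1 - a / x) else 1)
    (G : ℝ → ℝ) (hGmono : MonotoneOn G (Set.Icc (0:ℝ) 1))
    (hGrange : ∀ x ∈ Set.Icc (0:ℝ) 1, G x ∈ Set.Icc (0:ℝ) 1)
    (hGmean : (∫ x in (0:ℝ)..1, (1 - G x)) = μ) :
    (∫ x in (0:ℝ)..1,
        ((1 - Gbar x ^ 2) * (x * H' x + H x) - 2 * H x * Gbar x * (1 - Gbar x)))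
      = 2 * a - a ^ 2 ∧
    (∫ x in (0:ℝ)..1,
        ((1 - Gbar x ^ 2) * (x * H' x + H x) - 2 * H x * Gbar x * (1 - Gbar x)))
      ≤ ∫ x in (0:ℝ)..1,
          ((1 - G x ^ 2) * (x * H' x + H x) - 2 * H x * G x * (1 - G x)) := by
  obtain ⟨ha0, ha1⟩ := ha
  subst haμ
  have hHeq : H = hBar a := funext fun x => (hH x).trans (hBar_eq_ite ha0 ha1 x).symm
  have hH'eq (x : ℝ) (hxa : x ≠ a) : H' x = hBarDeriv a x :=
    (hH' x hxa).trans (hBarDeriv_eq ha0 ha1 hxa).symm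
  have hGint : IntervalIntegrable G volume 0 1 :=
    MonotoneOn.intervalIntegrable (by rwa [uIcc_of_le zero_le_one])
  have hmean : ∫ x in (0:ℝ)..1, G x = ∫ x in (0:ℝ)..1, equalRevenueCDF a x := by
    rw [integral_sub intervalIntegrable_const hGint] at hGmean
    rw [integral_equalRevenueCDF ha0 ha1]
    simp only [intervalIntegral.integral_const, sub_zero, smul_eq_mul, mul_one] at hGmean
    linarith
  change ∫ x in (0:ℝ)..1, revenueIntegrand H H' (Gbar x) x = _ ∧
    ∫ x in (0:ℝ)..1, revenueIntegrand H H' (Gbar x) x ≤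
      ∫ x in (0:ℝ)..1, revenueIntegrand H H' (G x) x
  rw [integral_revenueIntegrand_congr_deriv hH'eq, integral_revenueIntegrand_congr_deriv hH'eq,
    hHeq, show Gbar = equalRevenueCDF a from funext hGbar]
  exact ⟨integral_revenueIntegrand_equalRevenueCDF ha0 ha1,
    integral_revenueIntegrand_equalRevenueCDF_le ha0 ha1 hGint
      (fun x hx => hGrange x (Ioc_subset_Icc_self hx)) hmean⟩

/-- For any CDF G on [0,1] with mean μ, the revenue functional
L(G) = ∫₀¹ {(1 - G(x)²)(x·H̄'(x) + H̄(x)) - 2·H̄(x)·G(x)(1-G(x))} dx satisfies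
L(G) ≥ L(Ḡ) = 2a - a². -/
theorem revenue_minimized_by_Gbar (μ a : ℝ) (hμ : μ ∈ Set.Ioo (0:ℝ) 1)
    (ha : a ∈ Set.Ioo (0:ℝ) 1) (haμ : a * (1 - Real.log a) = μ)
    (H H' Gbar : ℝ → ℝ)
    (hH : ∀ x : ℝ, H x =
      if x = 0 then 0
      else if x = a then -(1 - a) / Real.log a
      else -(x * (1 - a) * (Real.log x - Real.log a)) / ((x - a) * Real.log a))
    (hH' : ∀ x : ℝ, x ≠ a →
      H' x = -((1 - a) * (x - a * Real.log x - μ)) / ((x - a) ^ 2 * Real.log a))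
    (hGbar : ∀ x : ℝ, Gbar x = if x < 1 then max 0 (1 - a / x) else 1)
    (G : ℝ → ℝ) (hGmono : MonotoneOn G (Set.Icc (0:ℝ) 1))
    (hGrange : ∀ x ∈ Set.Icc (0:ℝ) 1, G x ∈ Set.Icc (0:ℝ) 1)
    (hG1 : G 1 = 1)
    (hGmean : (∫ x in (0:ℝ)..1, (1 - G x)) = μ) :
    (∫ x in (0:ℝ)..1,
        ((1 - Gbar x ^ 2) * (x * H' x + H x) - 2 * H x * Gbar x * (1 - Gbar x)))
      = 2 * a - a ^ 2 ∧
    (∫ x in (0:ℝ)..1,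
        ((1 - Gbar x ^ 2) * (x * H' x + H x) - 2 * H x * Gbar x * (1 - Gbar x)))
      ≤ ∫ x in (0:ℝ)..1,
          ((1 - G x ^ 2) * (x * H' x + H x) - 2 * H x * G x * (1 - G x)) :=
  revenue_minimized_by_Gbar_general μ a ha haμ H H' Gbar hH hH' hGbar G hGmono hGrange hGmean
end

section
/- The expected revenue in the truth-telling equilibrium of the second-price auction with random reserve H̄ under the equal-revenue distribution Ḡ equals 2a - a². -/
/-!
On `(0, a)` the signal distribution vanishes, and on `(a, 1)` the equal-revenue distribution
`Ḡ = 1 - a / x` satisfies `x Ḡ' = 1 - Ḡ`. In both cases the integrand is the derivative of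
`x (1 - Ḡ(x)²) H̄(x)`. Writing `H̄(x) = k x (log x - log a) / (x - a)` with
`k = (a - 1) / log a > 0`, both `H̄` and `H̄'` are nonnegative (the latter by `log t ≤ t - 1`), so the integrand is
nonnegative, hence integrable, and the fundamental theorem of calculus on `[0, a]` and `[a, 1]`
gives `(1 - (1 - a)²) H̄(1) = 2a - a²`, as `H̄(1) = 1`.
-/

open Real Set Filter Topology intervalIntegral MeasureTheory

section

variable {a x : ℝ}

theorem integral_eq_sub_of_hasDerivAt_of_nonneg {f f' : ℝ → ℝ} {b c : ℝ} (hbc : b ≤ c)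
    (hcont : ContinuousOn f (Icc b c)) (hderiv : ∀ x ∈ Ioo b c, HasDerivAt f (f' x) x)
    (hpos : ∀ x ∈ Ioo b c, 0 ≤ f' x) :
    IntervalIntegrable f' volume b c ∧ ∫ y in b..c, f' y = f c - f b := by
  have hint : IntervalIntegrable f' volume b c :=
    (intervalIntegrable_iff_integrableOn_Ioc_of_le hbc).2
      (integrableOn_deriv_of_nonneg hcont hderiv hpos)
  exact ⟨hint, integral_eq_sub_of_hasDerivAt_of_le hbc hcont hderiv hint⟩

def revenueDensity (g h h' x : ℝ) : ℝ := (1 - g ^ 2) * (x * h' + h) - 2 * h * g * (1 - g)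

theorem revenueDensity_nonneg {g h h' x : ℝ} (hx : 0 ≤ x) (hh : 0 ≤ h) (hh' : 0 ≤ h')
    (hg : g ^ 2 ≤ 1) : 0 ≤ revenueDensity g h h' x := by
  have : revenueDensity g h h' x = (1 - g ^ 2) * x * h' + (1 - g) ^ 2 * h := by
    unfold revenueDensity; ring
  rw [this]
  have hg' : 0 ≤ 1 - g ^ 2 := by linarith
  positivity

theorem hasDerivAt_revenueDensity_zero {H : ℝ → ℝ} {h x : ℝ} (hH : HasDerivAt H h x) :
    HasDerivAt (fun y => y * H y) (revenueDensity 0 (H x) h x) x := by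
  refine ((hasDerivAt_id' x).fun_mul hH).congr_deriv ?_
  simp only [revenueDensity]; ring

theorem hasDerivAt_revenueDensity {G H : ℝ → ℝ} {g h x : ℝ} (hG : HasDerivAt G g x)
    (hH : HasDerivAt H h x) (hode : x * g = 1 - G x) :
    HasDerivAt (fun y => y * (1 - G y ^ 2) * H y) (revenueDensity (G x) (H x) h x) x := by
  refine (((hasDerivAt_id' x).fun_mul ((hG.fun_pow 2).const_sub 1)).fun_mul hH).congr_deriv ?_
  simp only [revenueDensity]
  linear_combination (-2 * G x * H x) * hode

theorem hasDerivAt_one_sub_div (hx : x ≠ 0) :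
    HasDerivAt (fun y => 1 - a / y) (a / x ^ 2) x := by
  simp only [div_eq_mul_inv]
  refine (((hasDerivAt_inv hx).const_mul a).const_sub 1).congr_deriv ?_
  ring

theorem mul_dslope_log_of_ne (hxa : x ≠ a) :
    x * dslope log a x = (x * log x - x * log a) / (x - a) := by
  rw [dslope_of_ne _ hxa, slope_def_field]; ring

theorem continuous_mul_dslope_log (ha : a ≠ 0) :
    Continuous fun x => x * dslope log a x := by
  refine continuous_iff_continuousAt.2 fun x => ?_
  rcases eq_or_ne x a with rfl | hxa
  · exact continuousAt_id.mul (continuousAt_dslope_same.2 (differentiableAt_log ha))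
  · have hquot : ContinuousAt (fun y => (y * log y - y * log a) / (y - a)) x :=
      ((continuous_mul_log.sub (continuous_id.mul continuous_const)).continuousAt).div
        (continuousAt_id.sub continuousAt_const) (sub_ne_zero.2 hxa)
    refine hquot.congr ?_
    filter_upwards [eventually_ne_nhds hxa] with y hy
    exact (mul_dslope_log_of_ne hy).symm

theorem hasDerivAt_mul_dslope_log (hx : x ≠ 0) (hxa : x ≠ a) :
    HasDerivAt (fun y => y * dslope log a y)
      ((x - a * log x - a * (1 - log a)) / (x - a) ^ 2) x := by
  have hquot := ((hasDerivAt_mul_log hx).sub ((hasDerivAt_id x).mul_const (log a))).div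
    ((hasDerivAt_id x).sub_const a) (sub_ne_zero.2 hxa)
  have hsub : x - a ≠ 0 := sub_ne_zero.2 hxa
  refine (hquot.congr_deriv ?_).congr_of_eventuallyEq ?_
  · simp only [id, Pi.sub_apply]; field_simp; ring
  · filter_upwards [eventually_ne_nhds hxa] with y hy
    exact mul_dslope_log_of_ne hy

theorem dslope_log_nonneg (ha : 0 < a) (hx : 0 < x) : 0 ≤ dslope log a x := by
  rcases eq_or_ne x a with rfl | hxa
  · rw [dslope_same, deriv_log]; positivity
  · rw [dslope_of_ne _ hxa, slope_def_field]
    rcases lt_or_gt_of_ne hxa with h | h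
    · exact div_nonneg_of_nonpos (by linarith [log_le_log hx h.le]) (by linarith)
    · exact div_nonneg (by linarith [log_le_log ha h.le]) (by linarith)

theorem mul_one_sub_log_le (ha : 0 < a) (hx : 0 < x) :
    a * (1 - log a) ≤ x - a * log x := by
  have h := log_le_sub_one_of_pos (div_pos hx ha)
  rw [log_div hx.ne' ha.ne'] at h
  have h' := mul_le_mul_of_nonneg_left h ha.le
  rw [mul_sub, mul_sub, mul_div_cancel₀ x ha.ne'] at h'
  linarith

/-- `dslope` extends the difference quotient of `log` by `1 / a` at `x = a`, filling the
removable singularity of `H̄` there. -/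
noncomputable def reserveCdf (a x : ℝ) : ℝ := (a - 1) / log a * (x * dslope log a x)

noncomputable def reserveDensity (a x : ℝ) : ℝ :=
  (a - 1) / log a * ((x - a * log x - a * (1 - log a)) / (x - a) ^ 2)

theorem continuous_reserveCdf (ha : a ≠ 0) : Continuous (reserveCdf a) :=
  continuous_const.mul (continuous_mul_dslope_log ha)

theorem hasDerivAt_reserveCdf (hx : x ≠ 0) (hxa : x ≠ a) :
    HasDerivAt (reserveCdf a) (reserveDensity a x) x :=
  (hasDerivAt_mul_dslope_log hx hxa).const_mul _

theorem reserveCdf_nonneg (ha0 : 0 < a) (ha1 : a < 1) (hx : 0 < x) :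
    0 ≤ reserveCdf a x :=
  mul_nonneg (div_nonneg_of_nonpos (by linarith) (log_neg ha0 ha1).le)
    (mul_nonneg hx.le (dslope_log_nonneg ha0 hx))

theorem reserveDensity_nonneg (ha0 : 0 < a) (ha1 : a < 1) (hx : 0 < x) :
    0 ≤ reserveDensity a x :=
  mul_nonneg (div_nonneg_of_nonpos (by linarith) (log_neg ha0 ha1).le)
    (div_nonneg (by linarith [mul_one_sub_log_le ha0 hx]) (sq_nonneg _))

theorem reserveCdf_one (ha0 : 0 < a) (ha1 : a ≠ 1) : reserveCdf a 1 = 1 := by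
  have hlog : log a ≠ 0 := log_ne_zero_of_pos_of_ne_one ha0 ha1
  have hsub : 1 - a ≠ 0 := sub_ne_zero.2 ha1.symm
  rw [reserveCdf, mul_dslope_log_of_ne (Ne.symm ha1), log_one]
  field_simp
  ring

theorem hasDerivAt_revenueDensity_equalRevenue {H : ℝ → ℝ} {h : ℝ} (hx : x ≠ 0)
    (hH : HasDerivAt H h x) :
    HasDerivAt (fun y => y * (1 - (1 - a / y) ^ 2) * H y)
      (revenueDensity (1 - a / x) (H x) h x) x :=
  hasDerivAt_revenueDensity (hasDerivAt_one_sub_div hx) hH (by field_simp; ring)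

theorem integral_revenueDensity_below {G h' : ℝ → ℝ} (ha0 : 0 < a) (ha1 : a < 1)
    (hG : ∀ x ∈ Ioo 0 a, G x = 0) (hh' : ∀ x ∈ Ioo 0 a, h' x = reserveDensity a x) :
    IntervalIntegrable (fun x => revenueDensity (G x) (reserveCdf a x) (h' x) x) volume 0 a ∧
      ∫ x in (0:ℝ)..a, revenueDensity (G x) (reserveCdf a x) (h' x) x = a * reserveCdf a a := by
  have h := integral_eq_sub_of_hasDerivAt_of_nonneg (f := fun y => y * reserveCdf a y)
    (f' := fun x => revenueDensity (G x) (reserveCdf a x) (h' x) x) ha0.le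
    (continuous_id.mul (continuous_reserveCdf ha0.ne')).continuousOn
    (fun x hx => by
      rw [hG x hx, hh' x hx]
      exact hasDerivAt_revenueDensity_zero (hasDerivAt_reserveCdf hx.1.ne' hx.2.ne))
    (fun x hx => by
      rw [hG x hx, hh' x hx]
      exact revenueDensity_nonneg hx.1.le (reserveCdf_nonneg ha0 ha1 hx.1)
        (reserveDensity_nonneg ha0 ha1 hx.1) (by norm_num))
  simpa using h

theorem integral_revenueDensity_above {G h' : ℝ → ℝ} (ha0 : 0 < a) (ha1 : a < 1)
    (hG : ∀ x ∈ Ioo a 1, G x = 1 - a / x) (hh' : ∀ x ∈ Ioo a 1, h' x = reserveDensity a x) :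
    IntervalIntegrable (fun x => revenueDensity (G x) (reserveCdf a x) (h' x) x) volume a 1 ∧
      ∫ x in a..1, revenueDensity (G x) (reserveCdf a x) (h' x) x
        = 2 * a - a ^ 2 - a * reserveCdf a a := by
  have h := integral_eq_sub_of_hasDerivAt_of_nonneg
    (f := fun y => y * (1 - (1 - a / y) ^ 2) * reserveCdf a y)
    (f' := fun x => revenueDensity (G x) (reserveCdf a x) (h' x) x) ha1.le
    ((continuousOn_id.mul (continuousOn_const.sub ((continuousOn_const.sub
      (continuousOn_const.div continuousOn_id fun y hy => (ha0.trans_le hy.1).ne')).pow 2))).mul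
      (continuous_reserveCdf ha0.ne').continuousOn)
    (fun x hx => by
      rw [hG x hx, hh' x hx]
      exact hasDerivAt_revenueDensity_equalRevenue (ha0.trans hx.1).ne'
        (hasDerivAt_reserveCdf (ha0.trans hx.1).ne' hx.1.ne'))
    (fun x hx => by
      have hx0 : 0 < x := ha0.trans hx.1
      rw [hG x hx, hh' x hx]
      exact revenueDensity_nonneg hx0.le (reserveCdf_nonneg ha0 ha1 hx0)
        (reserveDensity_nonneg ha0 ha1 hx0)
        (pow_le_one₀ (sub_nonneg.2 ((div_le_one hx0).2 hx.1.le)) (by linarith [div_pos ha0 hx0])))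
  rw [reserveCdf_one ha0 ha1.ne, div_self ha0.ne'] at h
  exact ⟨h.1, by rw [h.2]; ring⟩

end

theorem expected_revenue_value_general (μ a : ℝ)
    (ha : a ∈ Set.Ioo (0:ℝ) 1) (haμ : a * (1 - Real.log a) = μ)
    (H H' Gbar : ℝ → ℝ)
    (hH : ∀ x : ℝ, H x =
      if x = 0 then 0
      else if x = a then -(1 - a) / Real.log a
      else -(x * (1 - a) * (Real.log x - Real.log a)) / ((x - a) * Real.log a))
    (hH' : ∀ x : ℝ, x ≠ a →
      H' x = -((1 - a) * (x - a * Real.log x - μ)) / ((x - a) ^ 2 * Real.log a))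
    (hGbar : ∀ x : ℝ, Gbar x = if x < 1 then max 0 (1 - a / x) else 1) :
    (∫ x in (0:ℝ)..1,
        ((1 - Gbar x ^ 2) * (x * H' x + H x) - 2 * H x * Gbar x * (1 - Gbar x)))
      = 2 * a - a ^ 2 := by
  obtain ⟨ha0, ha1⟩ := ha
  obtain rfl : H = reserveCdf a := funext fun x => by
    rw [hH, reserveCdf]
    split_ifs with hx0 hxa
    · simp [hx0]
    · rw [hxa, dslope_same, deriv_log, mul_inv_cancel₀ ha0.ne']; ring
    · rw [mul_dslope_log_of_ne hxa]; field_simp; ring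
  have hH'_eq : ∀ x ∈ Ioo 0 1 \ {a}, H' x = reserveDensity a x := fun x hx => by
    have hxa : x - a ≠ 0 := sub_ne_zero.2 hx.2
    rw [hH' x hx.2, ← haμ, reserveDensity]
    field_simp
    ring
  have hG_below : ∀ x ∈ Ioo 0 a, Gbar x = 0 := fun x hx => by
    rw [hGbar, if_pos (hx.2.trans ha1), max_eq_left]
    linarith [(one_le_div hx.1).2 hx.2.le]
  have hG_above : ∀ x ∈ Ioo a 1, Gbar x = 1 - a / x := fun x hx => by
    rw [hGbar, if_pos hx.2, max_eq_right]
    linarith [(div_le_one (ha0.trans hx.1)).2 hx.1.le]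
  obtain ⟨hint₁, h₁⟩ := integral_revenueDensity_below ha0 ha1 hG_below
    fun x hx => hH'_eq x ⟨⟨hx.1, hx.2.trans ha1⟩, hx.2.ne⟩
  obtain ⟨hint₂, h₂⟩ := integral_revenueDensity_above ha0 ha1 hG_above
    fun x hx => hH'_eq x ⟨⟨ha0.trans hx.1, hx.2⟩, hx.1.ne'⟩
  change ∫ x in (0:ℝ)..1, revenueDensity (Gbar x) (reserveCdf a x) (H' x) x = _
  rw [← integral_add_adjacent_intervals hint₁ hint₂, h₁, h₂]
  ring

/-- The expected revenue in the truth-telling equilibrium of the second-price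
auction with random reserve H̄ under the equal-revenue distribution Ḡ equals
2a - a², computed via
∫₀¹ {(1 - Ḡ(x)²)(x·H̄'(x) + H̄(x)) - 2·H̄(x)·Ḡ(x)(1 - Ḡ(x))} dx = 2a - a². -/
theorem expected_revenue_value (μ a : ℝ) (hμ : μ ∈ Set.Ioo (0:ℝ) 1)
    (ha : a ∈ Set.Ioo (0:ℝ) 1) (haμ : a * (1 - Real.log a) = μ)
    (H H' Gbar : ℝ → ℝ)
    (hH : ∀ x : ℝ, H x =
      if x = 0 then 0
      else if x = a then -(1 - a) / Real.log a
      else -(x * (1 - a) * (Real.log x - Real.log a)) / ((x - a) * Real.log a))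
    (hH' : ∀ x : ℝ, x ≠ a →
      H' x = -((1 - a) * (x - a * Real.log x - μ)) / ((x - a) ^ 2 * Real.log a))
    (hGbar : ∀ x : ℝ, Gbar x = if x < 1 then max 0 (1 - a / x) else 1) :
    (∫ x in (0:ℝ)..1,
        ((1 - Gbar x ^ 2) * (x * H' x + H x) - 2 * H x * Gbar x * (1 - Gbar x)))
      = 2 * a - a ^ 2 :=
  expected_revenue_value_general μ a ha haμ H H' Gbar hH hH' hGbar
end
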